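/- For ε > 0 and 0 < α ≤ ε, the function g(α) = -α³/(6ε) + α²/2 + ε²/3 satisfies g(α) < ε², i.e., the clipped RS-FGSM expected squared coordinate magnitude is strictly less than the FGSM squared coordinate magnitude ε². -/
import Mathlib

/-- The clipped RS-FGSM expected squared coordinate magnitude is strictly below ε². -/
theorem stmt10 (ε α : ℝ) (hε : 0 < ε) (hα : 0 < α) (hαε : α ≤ ε) :
    -α ^ 3 / (6 * ε) + α ^ 2 / 2 + ε ^ 2 / 3 < ε ^ 2 := by
  rw [div_add' _ _ _ (by positivity), div_add' _ _ _ (by positivity), div_lt_iff₀ (by positivity)]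
  nlinarith [mul_le_mul_of_nonneg_left hαε (sq_nonneg α), sq_nonneg (ε - α), mul_pos hα hε]
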